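/- Let D_i, D_j be symmetric n×n matrices, F an n×m matrix with F^T F = Id, and define the projected operators P_i = D_i (Id - F F^T) + F F^T and P_j = D_j (Id - F F^T) + F F^T. Then ‖D_i - D_j‖_F^2 - ‖P_i - P_j‖_F^2 = Trace(F^T (D_i - D_j)^2 F). -/

import Mathlib

/-!
Write `A = Dᵢ - Dⱼ` and `P = F Fᵀ`, an orthogonal projection since `Fᵀ F = 1`. The projected
operators differ by `A (1 - P)`, and for a symmetric idempotent `Q = 1 - P` cycling the trace gives
`‖A Q‖² = tr (Aᵀ A Q)`. Hence the difference of the squared norms is `tr (Aᵀ A P) = tr (Fᵀ A² F)`.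
-/

open Matrix

namespace Matrix

variable {R : Type*} [CommRing R] {l m n : Type*} [Fintype l] [Fintype n]

theorem isIdempotentElem_mul_transpose [Fintype m] [DecidableEq m] {F : Matrix n m R}
    (hF : Fᵀ * F = 1) :
    IsIdempotentElem (F * Fᵀ) := by
  rw [IsIdempotentElem, Matrix.mul_assoc, ← Matrix.mul_assoc Fᵀ, hF, Matrix.one_mul]

theorem trace_transpose_mul_self_mul_of_isIdempotentElem {Q : Matrix n n R} (hQt : Qᵀ = Q)
    (hQ : IsIdempotentElem Q) (B : Matrix l n R) :
    ((B * Q)ᵀ * (B * Q)).trace = (Bᵀ * B * Q).trace := by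
  rw [transpose_mul, hQt, Matrix.mul_assoc, ← Matrix.mul_assoc Bᵀ, trace_mul_comm,
    Matrix.mul_assoc, hQ.eq]

theorem trace_transpose_mul_self_sub_compl [DecidableEq n] {P : Matrix n n R} (hPt : Pᵀ = P)
    (hP : IsIdempotentElem P) (B : Matrix l n R) :
    (Bᵀ * B).trace - ((B * (1 - P))ᵀ * (B * (1 - P))).trace = (Bᵀ * B * P).trace := by
  have hQt : (1 - P)ᵀ = 1 - P := by rw [transpose_sub, transpose_one, hPt]
  rw [trace_transpose_mul_self_mul_of_isIdempotentElem hQt hP.one_sub, mul_one_sub, trace_sub,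
    sub_sub_cancel]

end Matrix

theorem stmt_4 {n m : ℕ} (Di Dj : Matrix (Fin n) (Fin n) ℝ)
    (F : Matrix (Fin n) (Fin m) ℝ)
    (hDi : Diᵀ = Di) (hDj : Djᵀ = Dj) (hF : Fᵀ * F = 1) :
    ((Di - Dj)ᵀ * (Di - Dj)).trace -
      (((Di * (1 - F * Fᵀ) + F * Fᵀ) - (Dj * (1 - F * Fᵀ) + F * Fᵀ))ᵀ *
        ((Di * (1 - F * Fᵀ) + F * Fᵀ) - (Dj * (1 - F * Fᵀ) + F * Fᵀ))).trace =
      (Fᵀ * ((Di - Dj) * (Di - Dj)) * F).trace := by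
  have hdiff : Di * (1 - F * Fᵀ) + F * Fᵀ - (Dj * (1 - F * Fᵀ) + F * Fᵀ)
      = (Di - Dj) * (1 - F * Fᵀ) := by
    rw [sub_mul]; abel
  have hsymm : (Di - Dj)ᵀ = Di - Dj := by rw [transpose_sub, hDi, hDj]
  have hPt : (F * Fᵀ)ᵀ = F * Fᵀ := by rw [transpose_mul, transpose_transpose]
  rw [hdiff, trace_transpose_mul_self_sub_compl hPt (isIdempotentElem_mul_transpose hF), hsymm,
    ← Matrix.mul_assoc, trace_mul_cycle]
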